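/- Let λ ≥ max{1, G²} and x_1,…,x_T ∈ ℝ^d with ‖x_t‖₂ ≤ G. With A_t = λI + Σ_{s=1}^t x_s x_sᵀ (A_0 = λI), one has Σ_{t=1}^T ‖x_t‖²_{A_{t−1}^{-1}} ≤ 2 log(det(A_T)/det(λI)) ≤ 2d·log(1 + T·G²/(λd)). -/

import Mathlib

open Matrix

section Aux

lemma log_aux_stmt12 {u : ℝ} (h0 : 0 ≤ u) (h1 : u ≤ 1) : u ≤ 2 * Real.log (1 + u) := by
  have h2 : (0:ℝ) < 1 + u := by linarith
  have h := Real.log_le_sub_one_of_pos (x := 1/(1+u)) (by positivity)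
  rw [Real.log_div one_ne_zero h2.ne', Real.log_one] at h
  have h3 : u/(1+u) ≤ Real.log (1 + u) := by
    have : 1 - 1/(1+u) = u/(1+u) := by field_simp; ring
    linarith
  have h4 : u/2 ≤ u/(1+u) := div_le_div_of_nonneg_left h0 h2 (by linarith)
  linarith

variable {d : ℕ}

lemma vmv_posSemidef_stmt12 (v : Fin d → ℝ) : (vecMulVec v v).PosSemidef := by
  rw [Matrix.vecMulVec_eq Unit]
  have := Matrix.posSemidef_conjTranspose_mul_self (replicateRow Unit v)
  simpa using this

lemma smul_one_posDef_stmt12 {lam : ℝ} (h : 0 < lam) :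
    (lam • (1 : Matrix (Fin d) (Fin d) ℝ)).PosDef := by
  refine Matrix.PosDef.of_dotProduct_mulVec_pos ?_ ?_
  · simp [Matrix.IsHermitian, Matrix.conjTranspose_smul]
  · intro y hy
    have h1 : (lam • (1 : Matrix (Fin d) (Fin d) ℝ)) *ᵥ y = lam • y := by
      simp [Matrix.smul_mulVec]
    rw [h1]
    simp only [star_trivial, dotProduct_smul, smul_eq_mul]
    have h2 : 0 < y ⬝ᵥ y := by simpa using Matrix.dotProduct_self_star_pos_iff.mpr hy
    positivity

lemma sum_vmv_posSemidef_stmt12 (x : ℕ → Fin d → ℝ) (t : ℕ) :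
    (∑ s ∈ Finset.range t, vecMulVec (x s) (x s)).PosSemidef := by
  induction t with
  | zero => simpa using Matrix.PosSemidef.zero
  | succ n ih =>
      rw [Finset.sum_range_succ]
      exact ih.add (vmv_posSemidef_stmt12 (x n))

lemma A_posDef_stmt12 {lam : ℝ} (h : 0 < lam) (x : ℕ → Fin d → ℝ) (t : ℕ) :
    (lam • (1 : Matrix (Fin d) (Fin d) ℝ) + ∑ s ∈ Finset.range t, vecMulVec (x s) (x s)).PosDef :=
  (smul_one_posDef_stmt12 h).add_posSemidef (sum_vmv_posSemidef_stmt12 x t)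

lemma A_quad_lb_stmt12 {lam : ℝ} (x : ℕ → Fin d → ℝ) (t : ℕ) (y : Fin d → ℝ) :
    lam * (y ⬝ᵥ y) ≤ y ⬝ᵥ (lam • (1 : Matrix (Fin d) (Fin d) ℝ)
      + ∑ s ∈ Finset.range t, vecMulVec (x s) (x s)) *ᵥ y := by
  rw [Matrix.add_mulVec, dotProduct_add]
  have h1 : y ⬝ᵥ (lam • (1 : Matrix (Fin d) (Fin d) ℝ)) *ᵥ y = lam * (y ⬝ᵥ y) := by
    simp [Matrix.smul_mulVec]
  have h2 : 0 ≤ y ⬝ᵥ (∑ s ∈ Finset.range t, vecMulVec (x s) (x s)) *ᵥ y := by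
    simpa using (sum_vmv_posSemidef_stmt12 x t).dotProduct_mulVec_nonneg y
  linarith

lemma u_mem_stmt12 {lam G : ℝ} {A : Matrix (Fin d) (Fin d) ℝ} (hA : A.PosDef)
    (hlb : ∀ y : Fin d → ℝ, lam * (y ⬝ᵥ y) ≤ y ⬝ᵥ A *ᵥ y)
    {v : Fin d → ℝ} (hv : v ⬝ᵥ v ≤ G ^ 2) (hG2 : G ^ 2 ≤ lam) (hlam : 1 ≤ lam) :
    0 ≤ v ⬝ᵥ A⁻¹ *ᵥ v ∧ v ⬝ᵥ A⁻¹ *ᵥ v ≤ 1 := by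
  have hlam0 : 0 < lam := lt_of_lt_of_le one_pos hlam
  set y := A⁻¹ *ᵥ v with hy
  have hdet : IsUnit A.det := isUnit_iff_ne_zero.mpr hA.det_pos.ne'
  have hAy : A *ᵥ y = v := by
    rw [hy, Matrix.mulVec_mulVec, Matrix.mul_nonsing_inv _ hdet, Matrix.one_mulVec]
  have hu0 : 0 ≤ v ⬝ᵥ y := by simpa using hA.inv.posSemidef.dotProduct_mulVec_nonneg v
  refine ⟨hu0, ?_⟩
  have h1 : lam * (y ⬝ᵥ y) ≤ v ⬝ᵥ y := by
    have := hlb y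
    rw [hAy] at this; rwa [dotProduct_comm v y]
  have hcs : (v ⬝ᵥ y) ^ 2 ≤ (v ⬝ᵥ v) * (y ⬝ᵥ y) := by
    simpa [dotProduct, ← pow_two] using
      Finset.sum_mul_sq_le_sq_mul_sq Finset.univ v y
  have hyy : 0 ≤ y ⬝ᵥ y := by simpa using dotProduct_self_star_nonneg y
  have hvv : 0 ≤ v ⬝ᵥ v := by simpa using dotProduct_self_star_nonneg v
  nlinarith [hcs, h1, hu0, hyy, hvv, sq_nonneg (v ⬝ᵥ y)]

lemma det_rank_one_update_stmt12 {A : Matrix (Fin d) (Fin d) ℝ} (hA : A.PosDef) (v : Fin d → ℝ) :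
    (A + vecMulVec v v).det = A.det * (1 + v ⬝ᵥ A⁻¹ *ᵥ v) := by
  have hdet : IsUnit A.det := isUnit_iff_ne_zero.mpr hA.det_pos.ne'
  rw [Matrix.vecMulVec_eq Unit, Matrix.det_add_replicateCol_mul_replicateRow hdet]
  congr 1
  rw [Matrix.det_unique]
  simp [Matrix.mul_apply, Matrix.replicateRow, Matrix.replicateCol, dotProduct, Matrix.mulVec, Finset.mul_sum,
    Finset.sum_mul]
  rw [Finset.sum_comm]
  congr 1; ext i; congr 1; ext j; ring

lemma trace_eq_sum_eig_stmt12 {A : Matrix (Fin d) (Fin d) ℝ} (hA : A.IsHermitian) :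
    A.trace = ∑ i, hA.eigenvalues i := by
  simpa using hA.trace_eq_sum_eigenvalues

lemma jensen_log_stmt12 {d : ℕ} (hd : 0 < d) (μ : Fin d → ℝ) (hμ : ∀ i, 0 < μ i) :
    ∑ i, Real.log (μ i) ≤ d * Real.log ((∑ i, μ i) / d) := by
  have hd' : (0:ℝ) < d := Nat.cast_pos.mpr hd
  have key := strictConcaveOn_log_Ioi.concaveOn.le_map_sum (t := Finset.univ)
    (w := fun _ : Fin d => (d:ℝ)⁻¹) (p := μ)
    (fun i _ => by positivity)
    (by simp [Finset.card_univ]; field_simp)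
    (fun i _ => Set.mem_Ioi.mpr (hμ i))
  simp only [smul_eq_mul, ← Finset.mul_sum] at key
  calc ∑ i, Real.log (μ i) = (d:ℝ) * ((d:ℝ)⁻¹ * ∑ i, Real.log (μ i)) := by
        rw [← mul_assoc, mul_inv_cancel₀ hd'.ne', one_mul]
    _ ≤ (d:ℝ) * Real.log ((d:ℝ)⁻¹ * ∑ i, μ i) := mul_le_mul_of_nonneg_left key hd'.le
    _ = d * Real.log ((∑ i, μ i) / d) := by rw [inv_mul_eq_div]

lemma trace_vmv_stmt12 (v : Fin d → ℝ) : (vecMulVec v v).trace = v ⬝ᵥ v := by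
  simp [Matrix.trace, Matrix.diag, Matrix.vecMulVec_apply, dotProduct]

end Aux

theorem stmt_12 (d T : ℕ) (lam G : ℝ) (hG : 0 < G) (hlam : max 1 (G ^ 2) ≤ lam)
    (x : ℕ → (Fin d → ℝ)) (hx : ∀ t < T, Real.sqrt (x t ⬝ᵥ x t) ≤ G) :
    let A : ℕ → Matrix (Fin d) (Fin d) ℝ := fun t =>
      lam • (1 : Matrix (Fin d) (Fin d) ℝ) + ∑ s ∈ Finset.range t, vecMulVec (x s) (x s)
    (∑ t ∈ Finset.range T, x t ⬝ᵥ (A t)⁻¹ *ᵥ x t ≤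
        2 * Real.log ((A T).det / (lam • (1 : Matrix (Fin d) (Fin d) ℝ)).det)) ∧
      2 * Real.log ((A T).det / (lam • (1 : Matrix (Fin d) (Fin d) ℝ)).det) ≤
        2 * d * Real.log (1 + T * G ^ 2 / (lam * d)) := by
  intro A
  have hlam1 : (1:ℝ) ≤ lam := (le_max_left _ _).trans hlam
  have hG2 : G ^ 2 ≤ lam := (le_max_right _ _).trans hlam
  have hlam0 : (0:ℝ) < lam := lt_of_lt_of_le one_pos hlam1
  have hApos : ∀ t, (A t).PosDef := fun t => A_posDef_stmt12 hlam0 x t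
  have hx2 : ∀ t, t < T → x t ⬝ᵥ x t ≤ G ^ 2 := by
    intro t ht
    have h := hx t ht
    have h0 : 0 ≤ x t ⬝ᵥ x t := by simpa using dotProduct_self_star_nonneg (x t)
    nlinarith [Real.sq_sqrt h0, Real.sqrt_nonneg (x t ⬝ᵥ x t)]
  set u : ℕ → ℝ := fun t => x t ⬝ᵥ (A t)⁻¹ *ᵥ x t with hu
  have humem : ∀ t, t < T → 0 ≤ u t ∧ u t ≤ 1 := fun t ht =>
    u_mem_stmt12 (hApos t) (fun y => A_quad_lb_stmt12 x t y) (hx2 t ht) hG2 hlam1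
  have hdet0 : ∀ t, 0 < (A t).det := fun t => (hApos t).det_pos
  have hrec : ∀ t, (A (t+1)).det = (A t).det * (1 + u t) := by
    intro t
    have hstep : A (t+1) = A t + vecMulVec (x t) (x t) := by
      simp only [A, Finset.sum_range_succ, add_assoc]
    rw [hstep, det_rank_one_update_stmt12 (hApos t)]
  have hlogrec : ∀ t, t < T →
      Real.log (1 + u t) = Real.log (A (t+1)).det - Real.log (A t).det := by
    intro t ht
    have h1 : (0:ℝ) < 1 + u t := by have := (humem t ht).1; linarith
    rw [hrec t, Real.log_mul (hdet0 t).ne' h1.ne']; ring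
  have hdetA0 : (A 0).det = (lam • (1 : Matrix (Fin d) (Fin d) ℝ)).det := by
    simp [A]
  have hdetlam : (lam • (1 : Matrix (Fin d) (Fin d) ℝ)).det = lam ^ d := by
    simp [Matrix.det_smul]
  constructor
  · calc ∑ t ∈ Finset.range T, u t
        ≤ ∑ t ∈ Finset.range T, 2 * Real.log (1 + u t) := by
          refine Finset.sum_le_sum fun t ht => ?_
          rw [Finset.mem_range] at ht
          exact log_aux_stmt12 (humem t ht).1 (humem t ht).2
    _ = 2 * ∑ t ∈ Finset.range T, (Real.log (A (t+1)).det - Real.log (A t).det) := by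
          rw [Finset.mul_sum]
          exact Finset.sum_congr rfl fun t ht => by
            rw [hlogrec t (Finset.mem_range.mp ht)]
    _ = 2 * (Real.log (A T).det - Real.log (A 0).det) := by
          rw [Finset.sum_range_sub (fun t => Real.log (A t).det)]
    _ = 2 * Real.log ((A T).det / (lam • (1 : Matrix (Fin d) (Fin d) ℝ)).det) := by
          rw [Real.log_div (hdet0 T).ne' (by rw [← hdetA0]; exact (hdet0 0).ne'), hdetA0]
  · rcases Nat.eq_zero_or_pos d with hd | hd
    · subst hd
      simp [Matrix.det_isEmpty]
    · have hd' : (0:ℝ) < d := Nat.cast_pos.mpr hd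
      have hH := (hApos T).isHermitian
      have hμpos : ∀ i, 0 < hH.eigenvalues i := fun i => (hApos T).eigenvalues_pos i
      have hdetT : (A T).det = ∏ i, hH.eigenvalues i := by
        simpa using hH.det_eq_prod_eigenvalues
      have htr : (A T).trace = ∑ i, hH.eigenvalues i := trace_eq_sum_eig_stmt12 hH
      have htrval : (A T).trace = lam * d + ∑ t ∈ Finset.range T, (x t ⬝ᵥ x t) := by
        simp only [A, Matrix.trace_add, Matrix.trace_smul, Matrix.trace_one, Matrix.trace_sum,
          trace_vmv_stmt12, smul_eq_mul]
        simp
      have hsumnn : 0 ≤ ∑ t ∈ Finset.range T, (x t ⬝ᵥ x t) :=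
        Finset.sum_nonneg fun t _ => by simpa using dotProduct_self_star_nonneg (x t)
      have htrpos : 0 < (A T).trace := by rw [htrval]; positivity
      have htrle : (A T).trace ≤ lam * d + T * G ^ 2 := by
        rw [htrval]
        have : ∑ t ∈ Finset.range T, (x t ⬝ᵥ x t) ≤ ∑ t ∈ Finset.range T, G ^ 2 :=
          Finset.sum_le_sum fun t ht => hx2 t (Finset.mem_range.mp ht)
        rw [Finset.sum_const, Finset.card_range, nsmul_eq_mul] at this
        linarith
      have hlog1 : Real.log (A T).det ≤ d * Real.log ((A T).trace / d) := by
        rw [hdetT, Real.log_prod (fun i _ => (hμpos i).ne'), htr]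
        exact jensen_log_stmt12 hd hH.eigenvalues hμpos
      have hdivpos : (0:ℝ) < (A T).trace / d := by positivity
      have hlog2 : Real.log ((A T).trace / d) - Real.log lam
          = Real.log ((A T).trace / (d * lam)) := by
        rw [← Real.log_div hdivpos.ne' hlam0.ne', div_div]
      have hlog3 : Real.log ((A T).trace / (d * lam)) ≤ Real.log (1 + T * G ^ 2 / (lam * d)) := by
        have heq : (1 : ℝ) + T * G ^ 2 / (lam * d) = (lam * d + T * G ^ 2) / (lam * d) := by
          rw [add_div, div_self (by positivity : lam * (d:ℝ) ≠ 0)]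
        rw [heq, mul_comm (d:ℝ) lam]
        exact Real.log_le_log (by positivity) (by gcongr)
      have hlhs : Real.log ((A T).det / (lam • (1 : Matrix (Fin d) (Fin d) ℝ)).det)
          = Real.log (A T).det - d * Real.log lam := by
        rw [Real.log_div (hdet0 T).ne' (by rw [hdetlam]; positivity), hdetlam, Real.log_pow]
      rw [hlhs]
      have : Real.log (A T).det - d * Real.log lam
          ≤ d * Real.log (1 + T * G ^ 2 / (lam * d)) := by
        calc Real.log (A T).det - d * Real.log lam
            ≤ d * Real.log ((A T).trace / d) - d * Real.log lam := by linarith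
          _ = d * (Real.log ((A T).trace / d) - Real.log lam) := by ring
          _ = d * Real.log ((A T).trace / (d * lam)) := by rw [hlog2]
          _ ≤ d * Real.log (1 + T * G ^ 2 / (lam * d)) :=
              mul_le_mul_of_nonneg_left hlog3 hd'.le
      linarith
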